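/- arXiv:2603.13096 — 9 statements merged into one kernel-verified Lean document; each statement's English description precedes it below -/
import Mathlib

section
/- If a group G contains a finite-index subgroup H that is balanced, then G itself is balanced. -/
def IsBalanced (G : Type*) [Group G] : Prop :=
  ∀ g h : G, ¬ IsOfFinOrder h → ∀ k l : ℤ, k ≠ 0 → l ≠ 0 →
    g * h ^ k * g⁻¹ = h ^ l → |k| = |l|

/-! Some powers `g ^ r` and `h ^ m` lie in the finite-index subgroup `H`. Iterating the relation
`g h^k g⁻¹ = h^l` gives `g^r (h^m)^(k^r) g^(-r) = (h^m)^(l^r)`, a relation inside `H`, so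
balancedness of `H` yields `|k|^r = |l|^r`, whence `|k| = |l|`. -/

section ConjRelation

variable {G : Type*} [Group G] {g h : G} {k l : ℤ}

theorem conj_zpow_zpow_eq_of_conj_zpow_eq (hrel : g * h ^ k * g⁻¹ = h ^ l) (m : ℤ) :
    g * (h ^ m) ^ k * g⁻¹ = (h ^ m) ^ l := by
  rw [← zpow_mul, mul_comm, zpow_mul, ← conj_zpow, hrel, ← zpow_mul, mul_comm, zpow_mul]

theorem conj_pow_zpow_pow_eq_of_conj_zpow_eq (hrel : g * h ^ k * g⁻¹ = h ^ l) (n : ℕ) :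
    g ^ n * h ^ (k ^ n) * (g ^ n)⁻¹ = h ^ (l ^ n) := by
  induction n with
  | zero => simp
  | succ n ih =>
    calc g ^ (n + 1) * h ^ (k ^ (n + 1)) * (g ^ (n + 1))⁻¹
        = g ^ n * (g * (h ^ k ^ n) ^ k * g⁻¹) * (g ^ n)⁻¹ := by
          rw [← zpow_mul, ← pow_succ, pow_succ, mul_inv_rev]; group
      _ = g ^ n * (h ^ k ^ n) ^ l * (g ^ n)⁻¹ := by
          rw [conj_zpow_zpow_eq_of_conj_zpow_eq hrel]
      _ = h ^ (l ^ (n + 1)) := by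
          rw [← conj_zpow, ih, ← zpow_mul, ← pow_succ]

end ConjRelation

theorem IsBalanced.abs_eq_of_mem {G : Type*} [Group G] {H : Subgroup G} (hH : IsBalanced H)
    {x y : G} (hx : x ∈ H) (hy : y ∈ H) (hy_inf : ¬ IsOfFinOrder y) {k l : ℤ} (hk : k ≠ 0)
    (hl : l ≠ 0) (hrel : x * y ^ k * x⁻¹ = y ^ l) : |k| = |l| :=
  hH ⟨x, hx⟩ ⟨y, hy⟩ (fun hfin => hy_inf (Submonoid.isOfFinOrder_coe.2 hfin)) k l hk hl
    (Subtype.ext hrel)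

theorem balanced_of_finiteIndex_balanced_subgroup {G : Type*} [Group G]
    (H : Subgroup G) (hfi : H.FiniteIndex) (hH : IsBalanced H) : IsBalanced G := by
  intro g h hh k l hk hl hrel
  obtain ⟨r, hr, -, hgr⟩ := H.exists_pow_mem_of_index_ne_zero hfi.index_ne_zero g
  obtain ⟨m, hm, -, hhm⟩ := H.exists_pow_mem_of_index_ne_zero hfi.index_ne_zero h
  have hrel_H : g ^ r * (h ^ m) ^ (k ^ r) * (g ^ r)⁻¹ = (h ^ m) ^ (l ^ r) := by
    have := conj_zpow_zpow_eq_of_conj_zpow_eq hrel m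
    rw [zpow_natCast] at this
    exact conj_pow_zpow_pow_eq_of_conj_zpow_eq this r
  have hhm_inf : ¬ IsOfFinOrder (h ^ m) := fun hfin => hh (hfin.of_pow hm.ne')
  have habs := hH.abs_eq_of_mem hgr hhm hhm_inf (pow_ne_zero r hk) (pow_ne_zero r hl) hrel_H
  rw [abs_pow, abs_pow] at habs
  exact (pow_left_inj₀ (abs_nonneg k) (abs_nonneg l) hr.ne').1 habs
end

section
/- Let G be a balanced group and let H = ⟨h⟩ be an infinite cyclic subgroup of G such that the commensurator N_G[H] is generated by finitely many elements g_1, ..., g_n. Then there exists a finite-index subgroup H' ≤ H (namely H' = ⟨h^k⟩ for a suitable nonzero integer k) such that N_G[H] = N_G(H'), i.e., the commensurator of H equals the normalizer of H'. -/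
open Subgroup Pointwise

theorem conj_zpow_eq_or_eq_inv {G : Type*} [Group G] {g x : G}
    (hgx : g * x * g⁻¹ = x ∨ g * x * g⁻¹ = x⁻¹) (m : ℤ) :
    g * x ^ m * g⁻¹ = x ^ m ∨ g * x ^ m * g⁻¹ = (x ^ m)⁻¹ := by
  rw [← conj_zpow]
  rcases hgx with hgx | hgx <;> simp [hgx]

namespace Subgroup

variable {G : Type*} [Group G]

theorem conjAct_smul_zpowers (g x : G) :
    ConjAct.toConjAct g • zpowers x = zpowers (g * x * g⁻¹) := by
  rw [pointwise_smul_def]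
  exact MonoidHom.map_zpowers (MulDistribMulAction.toMonoidHom G (ConjAct.toConjAct g)) x

theorem mem_normalizer_zpowers_of_conj_eq_or_eq_inv {g x : G}
    (hgx : g * x * g⁻¹ = x ∨ g * x * g⁻¹ = x⁻¹) : g ∈ normalizer (zpowers x : Set G) := by
  rw [← conjAct_pointwise_smul_iff, conjAct_smul_zpowers]
  rcases hgx with hgx | hgx <;> simp [hgx]

theorem relIndex_zpowers_zpow_ne_zero (x : G) {k : ℤ} (hk : k ≠ 0) :
    (zpowers (x ^ k)).relIndex (zpowers x) ≠ 0 := by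
  rw [← range_zpowersHom x, ← index_comap]
  refine ne_zero_of_dvd_ne_zero ?_
    (index_dvd_of_le (H := (AddSubgroup.zmultiples k).toSubgroup) ?_)
  · simpa using hk
  · rintro _ ⟨m, rfl⟩
    exact mem_comap.mpr ⟨m, show (x ^ k) ^ m = x ^ (m * k) by rw [← zpow_mul, mul_comm]⟩

theorem commensurable_zpowers_zpow (x : G) {k : ℤ} (hk : k ≠ 0) :
    Commensurable (zpowers (x ^ k)) (zpowers x) :=
  ⟨relIndex_zpowers_zpow_ne_zero x hk,
    by simp [relIndex_eq_one.mpr (zpowers_le.mpr (zpow_mem (mem_zpowers x) k))]⟩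

theorem normalizer_le_commensurator (H : Subgroup G) :
    normalizer (H : Set G) ≤ Commensurable.commensurator H := fun _ hg => by
  rw [Commensurable.commensurator_mem_iff, conjAct_pointwise_smul_eq_self hg]

theorem exists_conj_pow_eq_zpow_of_mem_commensurator {g x : G}
    (hg : g ∈ Commensurable.commensurator (zpowers x)) :
    ∃ n : ℕ, 0 < n ∧ ∃ m : ℤ, g * x ^ n * g⁻¹ = x ^ m := by
  have hconj : g * x * g⁻¹ ∈ ConjAct.toConjAct g • zpowers x := by
    rw [conjAct_smul_zpowers]
    exact mem_zpowers _
  obtain ⟨n, hn, -, hmem, -⟩ := exists_pow_mem_of_relIndex_ne_zero hg.2 hconj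
  obtain ⟨m, hm⟩ := mem_zpowers_iff.mp hmem
  exact ⟨n, hn, m, by rw [hm, conj_pow]⟩

end Subgroup

theorem IsBalanced.exists_conj_zpow_eq_or_eq_inv {G : Type*} [Group G] (hG : IsBalanced G)
    {g x : G} (hx : ¬IsOfFinOrder x) (hg : g ∈ Commensurable.commensurator (zpowers x)) :
    ∃ n : ℤ, n ≠ 0 ∧ (g * x ^ n * g⁻¹ = x ^ n ∨ g * x ^ n * g⁻¹ = (x ^ n)⁻¹) := by
  obtain ⟨n, hn, m, hnm⟩ := exists_conj_pow_eq_zpow_of_mem_commensurator hg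
  rw [← zpow_natCast] at hnm
  have hn' : (n : ℤ) ≠ 0 := by exact_mod_cast hn.ne'
  have hm : m ≠ 0 := by
    rintro rfl
    rw [zpow_zero, conj_eq_one_iff, zpow_natCast] at hnm
    exact hx (isOfFinOrder_iff_pow_eq_one.mpr ⟨n, hn, hnm⟩)
  refine ⟨n, hn', ?_⟩
  rcases abs_eq_abs.mp (hG g x hx n m hn' hm hnm) with h | h
  · exact .inl (by rw [hnm, h])
  · exact .inr (by rw [hnm, h, zpow_neg, inv_inv])

theorem IsBalanced.exists_forall_conj_zpow_eq_or_eq_inv {G : Type*} [Group G]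
    (hG : IsBalanced G) {x : G} (hx : ¬IsOfFinOrder x) (S : Finset G)
    (hS : ∀ g ∈ S, g ∈ Commensurable.commensurator (zpowers x)) :
    ∃ k : ℤ, k ≠ 0 ∧ ∀ g ∈ S, g * x ^ k * g⁻¹ = x ^ k ∨ g * x ^ k * g⁻¹ = (x ^ k)⁻¹ := by
  classical
  induction S using Finset.induction_on with
  | empty => exact ⟨1, one_ne_zero, by simp⟩
  | insert a S _ ih =>
    obtain ⟨k, hk, hkS⟩ := ih fun g hg => hS g (Finset.mem_insert_of_mem hg)
    obtain ⟨n, hn, hna⟩ := hG.exists_conj_zpow_eq_or_eq_inv hx (hS a (Finset.mem_insert_self a S))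
    refine ⟨n * k, mul_ne_zero hn hk, ?_⟩
    simp only [Finset.forall_mem_insert, zpow_mul]
    refine ⟨conj_zpow_eq_or_eq_inv hna k, fun g hg => ?_⟩
    rw [← zpow_mul, mul_comm, zpow_mul]
    exact conj_zpow_eq_or_eq_inv (hkS g hg) n

/-- If `G` is balanced, `H = ⟨h⟩` is infinite cyclic and the commensurator `N_G[H]` is
finitely generated, then there is a finite-index subgroup `H' = ⟨h^k⟩` of `H` with
`N_G[H] = N_G(H')`. -/
theorem commensurator_eq_normalizer_of_balanced {G : Type*} [Group G] (hG : IsBalanced G)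
    (h : G) (hh : ¬ IsOfFinOrder h)
    (hfg : (Subgroup.Commensurable.commensurator (Subgroup.zpowers h)).FG) :
    ∃ k : ℤ, k ≠ 0 ∧
      Subgroup.Commensurable.commensurator (Subgroup.zpowers h) =
        Subgroup.normalizer ((Subgroup.zpowers (h ^ k) : Subgroup G) : Set G) := by
  obtain ⟨S, hS⟩ := hfg
  obtain ⟨k, hk, hkS⟩ := hG.exists_forall_conj_zpow_eq_or_eq_inv hh S
    fun g hg => hS ▸ subset_closure hg
  refine ⟨k, hk, le_antisymm ?_ ?_⟩
  · rw [← hS, closure_le]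
    exact fun g hg => mem_normalizer_zpowers_of_conj_eq_or_eq_inv (hkS g hg)
  · rw [← (commensurable_zpowers_zpow h hk).eq]
    exact normalizer_le_commensurator _
end

section
/- Consider a short exact sequence of groups 1 → N → G → Q → 1 (i.e., a surjective homomorphism p : G → Q with kernel N). If Q is balanced and N satisfies Condition A, then G is balanced. -/
/-- Condition A: powers of an infinite-order element related by an automorphism have
equal absolute exponents. -/
def ConditionA (N : Type*) [Group N] : Prop :=
  ∀ φ : N ≃* N, ∀ g : N, ¬ IsOfFinOrder g → ∀ k l : ℤ, k ≠ 0 → l ≠ 0 →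
    φ (g ^ k) = g ^ l → |k| = |l|

theorem balanced_of_ses_conditionA {G Q : Type*} [Group G] [Group Q]
    (p : G →* Q) (hp : Function.Surjective p)
    (hQ : IsBalanced Q) (hN : ConditionA p.ker) : IsBalanced G := by
  intro g h hh k l hk hl hconj
  by_cases hf : IsOfFinOrder (p h)
  case neg =>
    have : p g * (p h) ^ k * (p g)⁻¹ = (p h) ^ l := by
      simpa [map_mul, map_zpow, map_inv] using congrArg p hconj
    exact hQ (p g) (p h) hf k l hk hl this
  case pos =>
    set m := orderOf (p h) with hm
    have hm0 : m ≠ 0 := hf.orderOf_pos.ne'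
    have hmem : h ^ m ∈ p.ker := by
      rw [MonoidHom.mem_ker, map_pow, hm]
      exact pow_orderOf_eq_one (p h)
    set n : p.ker := ⟨h ^ m, hmem⟩ with hn
    have hninf : ¬ IsOfFinOrder n := by
      intro hfin
      have : IsOfFinOrder ((n : G)) := Submonoid.isOfFinOrder_coe.2 hfin
      rw [hn] at this
      rcases isOfFinOrder_pow.1 this with h1 | h2
      · exact hh h1
      · exact hm0 h2
    have key : g * h ^ ((m : ℤ) * k) * g⁻¹ = h ^ ((m : ℤ) * l) := by
      rw [mul_comm (m : ℤ) k, zpow_mul, mul_comm (m : ℤ) l, zpow_mul,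
        ← conj_zpow, hconj]
    refine hN (MulAut.conjNormal g) n hninf k l hk hl ?_
    ext
    push_cast [MulAut.conjNormal_apply, hn]
    rw [← zpow_natCast h m, ← zpow_mul, ← zpow_mul]
    exact key
end

section
/- Every virtually cyclic group satisfies Condition A: if G is a group containing a cyclic subgroup of finite index, then for every automorphism φ of G and every element g of G of infinite order, the relation φ(g^m) = g^n with m, n nonzero integers implies |m| = |n|. -/
open Subgroup

section
variable {G : Type*} [Group G] {g : G}

lemma comap_zpowersHom_zpowers_zpow (hg : ¬IsOfFinOrder g) (k : ℤ) :
    (zpowers (g ^ k)).comap (zpowersHom G g) = (AddSubgroup.zmultiples k).toSubgroup := by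
  have hinj : Function.Injective (g ^ · : ℤ → G) := injective_zpow_iff_not_isOfFinOrder.2 hg
  ext n
  simp only [mem_comap, zpowersHom_apply, mem_zpowers_iff, ← zpow_mul, hinj.eq_iff,
    Multiplicative.mem_toSubgroup, Int.mem_zmultiples_iff, Dvd.dvd, eq_comm]

lemma index_zpowers_zpow (hg : ¬IsOfFinOrder g) (k : ℤ) :
    (zpowers (g ^ k)).index = k.natAbs * (zpowers g).index := by
  have hle : zpowers (g ^ k) ≤ zpowers g := zpowers_le.2 (zpow_mem (mem_zpowers g) k)
  rw [← relIndex_mul_index hle, ← range_zpowersHom g, ← index_comap,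
    comap_zpowersHom_zpowers_zpow hg, AddSubgroup.index_toSubgroup, Int.index_zmultiples]

lemma index_zpowers_ne_zero_of_isCyclic {H : Subgroup G} [IsCyclic H] (hH : H.index ≠ 0)
    (hg : ¬IsOfFinOrder g) : (zpowers g).index ≠ 0 := by
  obtain ⟨n, hn, -, hgnH⟩ := exists_pow_mem_of_index_ne_zero hH g
  obtain ⟨x, hx⟩ := IsCyclic.exists_generator (α := H)
  obtain ⟨b, hb⟩ := hx ⟨g ^ n, hgnH⟩
  replace hb : (x : G) ^ b = g ^ (n : ℤ) := by simpa using congrArg Subtype.val hb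
  have hgn : ¬IsOfFinOrder (g ^ (n : ℤ)) := by simp [isOfFinOrder_pow, hg, hn.ne']
  have hx_inf : ¬IsOfFinOrder (x : G) := fun h ↦ hgn (hb ▸ h.zpow)
  have hxH : zpowers (x : G) = H := by
    refine le_antisymm (zpowers_le.2 x.2) fun y hy ↦ ?_
    obtain ⟨m, hm⟩ := hx ⟨y, hy⟩
    exact ⟨m, by simpa using congrArg Subtype.val hm⟩
  have hb0 : b ≠ 0 := by rintro rfl; exact hgn (hb ▸ by simp)
  have : (zpowers (g ^ (n : ℤ))).index ≠ 0 := by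
    rw [← hb, index_zpowers_zpow hx_inf, hxH]
    exact mul_ne_zero (Int.natAbs_ne_zero.2 hb0) hH
  rw [index_zpowers_zpow hg] at this
  exact right_ne_zero_of_mul this

theorem conditionA_of_index_zpowers_ne_zero
    (h : ∀ g : G, ¬IsOfFinOrder g → (zpowers g).index ≠ 0) : ConditionA G := by
  intro φ g hg k l _ _ hφ
  have key : (zpowers (g ^ l)).index = (zpowers (g ^ k)).index := by
    rw [← hφ, ← index_map_equiv (zpowers (g ^ k)) φ, MonoidHom.map_zpowers]
    rfl
  rw [index_zpowers_zpow hg, index_zpowers_zpow hg] at key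
  rw [Int.abs_eq_natAbs, Int.abs_eq_natAbs,
    Nat.eq_of_mul_eq_mul_right (Nat.pos_of_ne_zero (h g hg)) key]

end

/-- Every virtually cyclic group satisfies Condition A. -/
theorem virtuallyCyclic_conditionA {G : Type*} [Group G]
    (hvc : ∃ H : Subgroup G, IsCyclic H ∧ H.FiniteIndex) : ConditionA G := by
  obtain ⟨H, hH, hHfi⟩ := hvc
  exact conditionA_of_index_zpowers_ne_zero fun _ ↦
    index_zpowers_ne_zero_of_isCyclic hHfi.index_ne_zero
end

section
/- Let G be a group satisfying Condition MAX: every infinite cyclic subgroup of G is contained in a unique maximal virtually cyclic subgroup of G. Then G satisfies Condition A: for every automorphism φ of G and every infinite-order element h of G, the relation φ(h^m) = h^n with m, n nonzero integers implies |m| = |n|. -/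
/-- A group is virtually cyclic if it has a cyclic subgroup of finite index. -/
def IsVirtuallyCyclic (G : Type*) [Group G] : Prop :=
  ∃ H : Subgroup G, IsCyclic H ∧ H.FiniteIndex

/-- Condition MAX: every infinite cyclic subgroup is contained in a unique maximal
virtually cyclic subgroup. -/
def ConditionMAX (G : Type*) [Group G] : Prop :=
  ∀ h : G, ¬ IsOfFinOrder h →
    ∃! M : Subgroup G, IsVirtuallyCyclic M ∧ Subgroup.zpowers h ≤ M ∧
      ∀ M' : Subgroup G, IsVirtuallyCyclic M' → M ≤ M' → M = M'

/-!
Let `M` be the maximal virtually cyclic subgroup containing `h`. It is also the maximal one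
containing `h ^ l`, and so is `φ M`, since it contains `φ (h ^ k) = h ^ l`; by uniqueness
`φ M = M`. As `M` is virtually cyclic, `⟨h⟩` has finite index `d` in `M`, and `⟨h ^ k⟩` has
index `|k| d`. The automorphism `φ` of `M` maps `⟨h ^ k⟩` onto `⟨h ^ l⟩` and preserves indices,
so `|k| d = |l| d`.
-/

open Subgroup

section

variable {G : Type*} [Group G]

theorem not_isOfFinOrder_zpow {g : G} (hg : ¬IsOfFinOrder g) {k : ℤ} (hk : k ≠ 0) :
    ¬IsOfFinOrder (g ^ k) := by
  obtain ⟨n, rfl | rfl⟩ := Int.eq_nat_or_neg k <;>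
    simp_all [isOfFinOrder_pow]

theorem index_zpowers_ofAdd (k : ℤ) :
    (zpowers (Multiplicative.ofAdd k)).index = k.natAbs := by
  rw [← index_toAddSubgroup]
  exact Int.index_zmultiples k

theorem relIndex_zpowers_zpow {g : G} (hg : ¬IsOfFinOrder g) (k : ℤ) :
    (zpowers (g ^ k)).relIndex (zpowers g) = k.natAbs := by
  have hinj : Function.Injective (zpowersHom G g) :=
    (injective_zpow_iff_not_isOfFinOrder.mpr hg).comp Multiplicative.toAdd.injective
  have hmap : (zpowers (Multiplicative.ofAdd k)).map (zpowersHom G g) = zpowers (g ^ k) := by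
    rw [MonoidHom.map_zpowers]
    rfl
  rw [← range_zpowersHom g, MonoidHom.range_eq_map, ← hmap,
    relIndex_map_map_of_injective _ _ hinj, relIndex_top_right, index_zpowers_ofAdd]

theorem relIndex_zpowers_zpow_of_le {g : G} (hg : ¬IsOfFinOrder g) {M : Subgroup G}
    (hgM : zpowers g ≤ M) (k : ℤ) :
    (zpowers (g ^ k)).relIndex M = k.natAbs * (zpowers g).relIndex M := by
  rw [← relIndex_zpowers_zpow hg k,
    relIndex_mul_relIndex _ _ _ (zpowers_le.mpr (zpow_mem (mem_zpowers g) k)) hgM]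

theorem zpowers_subgroupOf {M : Subgroup G} {g : G} (hg : g ∈ M) :
    (zpowers g).subgroupOf M = zpowers ⟨g, hg⟩ := by
  apply map_injective M.subtype_injective
  rw [subgroupOf_map_subtype, MonoidHom.map_zpowers, inf_of_le_left (zpowers_le.mpr hg)]
  rfl

theorem IsVirtuallyCyclic.of_mulEquiv {H : Type*} [Group H] (e : G ≃* H)
    (hG : IsVirtuallyCyclic G) : IsVirtuallyCyclic H := by
  obtain ⟨C, hC, hCfi⟩ := hG
  refine ⟨C.map (e : G →* H), isCyclic_of_surjective _ (e.subgroupMap C).surjective, ⟨?_⟩⟩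
  rw [index_map_equiv]
  exact hCfi.index_ne_zero

theorem IsVirtuallyCyclic.index_zpowers_ne_zero (hG : IsVirtuallyCyclic G) {g : G}
    (hg : ¬IsOfFinOrder g) : (zpowers g).index ≠ 0 := by
  obtain ⟨C, hC, hCfi⟩ := hG
  obtain ⟨c, rfl⟩ := C.isCyclic_iff_exists_zpowers_eq_top.mp hC
  obtain ⟨n, hn, -, hgn⟩ := exists_pow_mem_of_index_ne_zero hCfi.index_ne_zero g
  obtain ⟨j, hj⟩ := mem_zpowers_iff.mp hgn
  have hgn_inf : ¬IsOfFinOrder (g ^ n) := by simp [isOfFinOrder_pow, hg, hn.ne']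
  have hj0 : j ≠ 0 := by
    rintro rfl
    exact hgn_inf (by simp [← hj])
  have hc : ¬IsOfFinOrder c := fun hc => hgn_inf (hj ▸ hc.zpow)
  have hgn_index : (zpowers (g ^ n)).index ≠ 0 := by
    rw [← hj, ← relIndex_mul_index (zpowers_le.mpr (zpow_mem (mem_zpowers c) j)),
      relIndex_zpowers_zpow hc]
    exact mul_ne_zero (Int.natAbs_ne_zero.mpr hj0) hCfi.index_ne_zero
  exact ne_zero_of_dvd_ne_zero hgn_index
    (index_dvd_of_le (zpowers_le.mpr (pow_mem (mem_zpowers g) n)))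

theorem IsVirtuallyCyclic.relIndex_zpowers_ne_zero {M : Subgroup G} (hM : IsVirtuallyCyclic M)
    {g : G} (hg : ¬IsOfFinOrder g) (hgM : g ∈ M) : (zpowers g).relIndex M ≠ 0 := by
  rw [relIndex, zpowers_subgroupOf hgM]
  exact hM.index_zpowers_ne_zero fun hfin => hg (M.subtype.isOfFinOrder hfin)

def IsMaximalVirtuallyCyclic (M : Subgroup G) : Prop :=
  IsVirtuallyCyclic M ∧ ∀ M' : Subgroup G, IsVirtuallyCyclic M' → M ≤ M' → M = M'

theorem IsMaximalVirtuallyCyclic.map_mulEquiv {M : Subgroup G}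
    (hM : IsMaximalVirtuallyCyclic M) {H : Type*} [Group H] (e : G ≃* H) :
    IsMaximalVirtuallyCyclic (M.map (e : G →* H)) := by
  refine ⟨hM.1.of_mulEquiv (e.subgroupMap M), fun M' hM' hle => ?_⟩
  have hcomap : M = M'.comap (e : G →* H) := by
    refine hM.2 _ ?_ (map_le_iff_le_comap.mp hle)
    rw [comap_equiv_eq_map_symm]
    exact hM'.of_mulEquiv (e.symm.subgroupMap M')
  rw [hcomap, map_comap_eq_self_of_surjective e.surjective]

theorem ConditionMAX.eq_of_isMaximalVirtuallyCyclic (hmax : ConditionMAX G) {x : G}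
    (hx : ¬IsOfFinOrder x) {M N : Subgroup G} (hM : IsMaximalVirtuallyCyclic M)
    (hxM : zpowers x ≤ M) (hN : IsMaximalVirtuallyCyclic N) (hxN : zpowers x ≤ N) : M = N :=
  (hmax x hx).unique ⟨hM.1, hxM, hM.2⟩ ⟨hN.1, hxN, hN.2⟩

end

theorem conditionA_of_conditionMAX {G : Type*} [Group G] (hmax : ConditionMAX G) :
    ConditionA G := by
  intro φ h hh k l _ hl heq
  obtain ⟨M, ⟨hMvc, hhM, hMmax⟩, -⟩ := hmax h hh
  have hM : IsMaximalVirtuallyCyclic M := ⟨hMvc, hMmax⟩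
  have hlM : zpowers (h ^ l) ≤ M := zpowers_le.mpr (hhM (zpow_mem (mem_zpowers h) l))
  have hlφM : zpowers (h ^ l) ≤ M.map (φ : G →* G) :=
    zpowers_le.mpr ⟨h ^ k, hhM (zpow_mem (mem_zpowers h) k), heq⟩
  have hφM : M.map (φ : G →* G) = M :=
    hmax.eq_of_isMaximalVirtuallyCyclic (not_isOfFinOrder_zpow hh hl) (hM.map_mulEquiv φ)
      hlφM hM hlM
  have hindex : (zpowers (h ^ k)).relIndex M = (zpowers (h ^ l)).relIndex M := by
    rw [← relIndex_map_map_of_injective (f := (φ : G →* G)) _ _ φ.injective, hφM, MonoidHom.map_zpowers]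
    exact congrArg (fun x => (zpowers x).relIndex M) heq
  rw [relIndex_zpowers_zpow_of_le hh hhM, relIndex_zpowers_zpow_of_le hh hhM] at hindex
  have hd := Nat.pos_of_ne_zero (hMvc.relIndex_zpowers_ne_zero hh (hhM (mem_zpowers h)))
  rw [Int.abs_eq_natAbs, Int.abs_eq_natAbs, Nat.eq_of_mul_eq_mul_right hd hindex]
end

section
/- A direct limit (colimit over a directed index set) of a directed system of balanced groups is balanced. -/
/-! A relation `g * h ^ k * g⁻¹ = h ^ l` in the direct limit lifts, through a common stage for
`g` and `h`, to a relation that holds after mapping to a later stage `G j`. Since the image of the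
lifted `h` in the limit has infinite order, so does the lifted `h` itself, and balancedness of `G j`
gives `|k| = |l|`. -/

theorem IsBalanced.abs_eq_of_map {H L : Type*} [Group H] [Group L] (hH : IsBalanced H)
    (φ : H →* L) {g h : H} (hh : ¬ IsOfFinOrder (φ h)) {k l : ℤ} (hk : k ≠ 0) (hl : l ≠ 0)
    (hrel : g * h ^ k * g⁻¹ = h ^ l) : |k| = |l| :=
  hH g h (fun hfin => hh (φ.isOfFinOrder hfin)) k l hk hl hrel

section DirectLimit

variable {I : Type*} [Preorder I] {G : I → Type*} [∀ i, Group (G i)] {L : Type*} [Group L]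
  {f : ∀ i j, i ≤ j → G i →* G j} {ι : ∀ i, G i →* L}

theorem exists_common_lift [IsDirected I (· ≤ ·)]
    (hcompat : ∀ i j (hij : i ≤ j) (x : G i), ι j (f i j hij x) = ι i x)
    (hsurj : ∀ x : L, ∃ i, ∃ y : G i, ι i y = x) (x y : L) :
    ∃ i, ∃ a b : G i, ι i a = x ∧ ι i b = y := by
  obtain ⟨i, a, rfl⟩ := hsurj x
  obtain ⟨j, b, rfl⟩ := hsurj y
  obtain ⟨m, him, hjm⟩ := directed_of (· ≤ ·) i j
  exact ⟨m, f i m him a, f j m hjm b, hcompat .., hcompat ..⟩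

theorem exists_map_eq_of_eq
    (hker : ∀ i (x : G i), ι i x = 1 → ∃ j, ∃ hij : i ≤ j, f i j hij x = 1)
    {i : I} {a b : G i} (hab : ι i a = ι i b) :
    ∃ j, ∃ hij : i ≤ j, f i j hij a = f i j hij b := by
  obtain ⟨j, hij, hj⟩ := hker i (a * b⁻¹) (by rw [map_mul, map_inv, hab, mul_inv_cancel])
  exact ⟨j, hij, by rwa [map_mul, map_inv, mul_inv_eq_one] at hj⟩

end DirectLimit

/-- `hcompat`, `hsurj` and `hker` characterize `L`, with the maps `ι i`, as the direct limit of
the directed system `f`. -/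
theorem directLimit_balanced {I : Type*} [Preorder I] [IsDirected I (· ≤ ·)]
    (G : I → Type*) [∀ i, Group (G i)] {L : Type*} [Group L]
    (f : ∀ i j, i ≤ j → G i →* G j)
    (ι : ∀ i, G i →* L)
    (hcompat : ∀ i j (hij : i ≤ j) (x : G i), ι j (f i j hij x) = ι i x)
    (hsurj : ∀ x : L, ∃ i, ∃ y : G i, ι i y = x)
    (hker : ∀ i (x : G i), ι i x = 1 → ∃ j, ∃ hij : i ≤ j, f i j hij x = 1)
    (hbal : ∀ i, IsBalanced (G i)) : IsBalanced L := by
  intro g h hh k l hk hl hrel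
  obtain ⟨i, a, b, rfl, rfl⟩ := exists_common_lift hcompat hsurj g h
  have hrel_i : ι i (a * b ^ k * a⁻¹) = ι i (b ^ l) := by
    simpa only [map_mul, map_inv, map_zpow] using hrel
  obtain ⟨j, hij, hrel_j⟩ := exists_map_eq_of_eq hker hrel_i
  rw [map_mul, map_mul, map_inv, map_zpow, map_zpow] at hrel_j
  exact (hbal j).abs_eq_of_map (ι j) (by rwa [hcompat]) hk hl hrel_j
end

section
/- Every finitely generated nilpotent group is balanced. Consequently, every virtually nilpotent group is balanced. -/
open Subgroup

lemma conj_zpow_pow_eq_of_conj_zpow_eq {G : Type*} [Group G] {g h : G} {k l : ℤ}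
    (hgh : g * h ^ k * g⁻¹ = h ^ l) (n : ℕ) :
    g ^ n * h ^ (k ^ n) * (g ^ n)⁻¹ = h ^ (l ^ n) := by
  induction n with
  | zero => simp
  | succ n ih =>
    calc g ^ (n + 1) * h ^ (k ^ (n + 1)) * (g ^ (n + 1))⁻¹
        = g * (g ^ n * (h ^ (k ^ n)) ^ k * (g ^ n)⁻¹) * g⁻¹ := by
          rw [pow_succ k, zpow_mul, pow_succ']; group
      _ = g * (h ^ k) ^ (l ^ n) * g⁻¹ := by
          rw [← conj_zpow, ih, ← zpow_mul, mul_comm, zpow_mul]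
      _ = h ^ (l ^ (n + 1)) := by
          rw [← conj_zpow, hgh, ← zpow_mul, pow_succ', mul_comm]

lemma eq_of_conj_zpow_eq_of_isOfFinOrder_mk_center {G : Type*} [Group G] {g h : G} {k l : ℤ}
    (hh : ¬IsOfFinOrder h) (hcen : IsOfFinOrder (h : G ⧸ center G))
    (hgh : g * h ^ k * g⁻¹ = h ^ l) : k = l := by
  obtain ⟨m, hm, hhm⟩ := isOfFinOrder_iff_pow_eq_one.1 hcen
  rw [← QuotientGroup.mk_pow, QuotientGroup.eq_one_iff] at hhm
  have hfix : g * (h ^ m) ^ k * g⁻¹ = (h ^ m) ^ k := by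
    rw [mem_center_iff.1 (zpow_mem hhm k) g, mul_inv_cancel_right]
  have hml : h ^ ((m : ℤ) * k) = h ^ ((m : ℤ) * l) := by
    calc h ^ ((m : ℤ) * k) = g * (h ^ m) ^ k * g⁻¹ := by rw [hfix, zpow_mul, zpow_natCast]
      _ = (g * h ^ k * g⁻¹) ^ (m : ℤ) := by rw [conj_zpow, ← zpow_natCast, ← zpow_mul,
          ← zpow_mul, mul_comm]
      _ = h ^ ((m : ℤ) * l) := by rw [hgh, ← zpow_mul, mul_comm]
  have hm0 : (m : ℤ) ≠ 0 := by exact_mod_cast hm.ne'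
  exact mul_left_cancel₀ hm0 (injective_zpow_iff_not_isOfFinOrder.2 hh hml)

theorem IsBalanced.of_isNilpotent (G : Type*) [Group G] [Group.IsNilpotent G] : IsBalanced G := by
  refine Group.nilpotent_center_quotient_ind (P := fun G _ _ => IsBalanced G) G ?_ ?_
  · intro G _ _ g h hh
    exact absurd (Subsingleton.elim h 1 ▸ IsOfFinOrder.one) hh
  · intro G _ _ ih g h hh k l hk hl hgh
    by_cases hcen : IsOfFinOrder (h : G ⧸ center G)
    · rw [eq_of_conj_zpow_eq_of_isOfFinOrder_mk_center hh hcen hgh]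
    · exact ih g h hcen k l hk hl (by simpa using congrArg ((↑) : G → G ⧸ center G) hgh)

theorem IsBalanced.of_finiteIndex {G : Type*} [Group G] {H : Subgroup G} [H.FiniteIndex]
    (hH : IsBalanced H) : IsBalanced G := by
  intro g h hh k l hk hl hgh
  have hindex : H.index ≠ 0 := FiniteIndex.index_ne_zero
  obtain ⟨n, hn, -, hgn⟩ := exists_pow_mem_of_index_ne_zero hindex g
  obtain ⟨m, hm, -, hhm⟩ := exists_pow_mem_of_index_ne_zero hindex h
  let a : H := ⟨g ^ n, hgn⟩
  let b : H := ⟨h ^ m, hhm⟩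
  have hb : ¬IsOfFinOrder b := fun hfin =>
    hh (isOfFinOrder_pow.1 (H.subtype.isOfFinOrder hfin) |>.resolve_right hm.ne')
  have hab : a * b ^ (k ^ n) * a⁻¹ = b ^ (l ^ n) := by
    ext
    simp only [a, b, coe_mul, coe_inv, coe_zpow]
    rw [← zpow_natCast h m, ← zpow_mul, mul_comm, zpow_mul, ← conj_zpow,
      conj_zpow_pow_eq_of_conj_zpow_eq hgh n, ← zpow_mul, ← zpow_mul, mul_comm]
  have habs := hH a b hb (k ^ n) (l ^ n) (pow_ne_zero n hk) (pow_ne_zero n hl) hab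
  rwa [abs_pow, abs_pow, pow_left_inj₀ (abs_nonneg k) (abs_nonneg l) hn.ne'] at habs

/-- Every finitely generated nilpotent group is balanced; consequently every virtually
nilpotent group is balanced. -/
theorem nilpotent_balanced :
    (∀ (G : Type) [Group G], Group.FG G → Group.IsNilpotent G → IsBalanced G) ∧
    (∀ (G : Type) [Group G],
      (∃ H : Subgroup G, Group.IsNilpotent H ∧ H.FiniteIndex) → IsBalanced G) := by
  refine ⟨fun G _ _ _ => IsBalanced.of_isNilpotent G, ?_⟩
  rintro G _ ⟨H, _, _⟩
  exact IsBalanced.of_finiteIndex (IsBalanced.of_isNilpotent H)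
end

section
/- Let 1 → N → G → Q → 1 be a group extension in which N is a torsion group (every element of N has finite order) and Q is balanced. Then G is balanced. -/
theorem MonoidHom.isOfFinOrder_of_isOfFinOrder_map {G Q : Type*} [Group G] [Group Q]
    (p : G →* Q) (htor : ∀ x ∈ p.ker, IsOfFinOrder x) {x : G}
    (hx : IsOfFinOrder (p x)) : IsOfFinOrder x := by
  obtain ⟨n, hn, hpow⟩ := hx.exists_pow_eq_one
  have hker : x ^ n ∈ p.ker := by rw [MonoidHom.mem_ker, map_pow, hpow]
  exact (htor _ hker).of_pow hn.ne'

theorem IsBalanced.of_monoidHom {G Q : Type*} [Group G] [Group Q] (p : G →* Q)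
    (hinf : ∀ x : G, ¬ IsOfFinOrder x → ¬ IsOfFinOrder (p x)) (hQ : IsBalanced Q) :
    IsBalanced G := by
  intro g h hh k l hk hl heq
  refine hQ (p g) (p h) (hinf h hh) k l hk hl ?_
  simpa only [map_mul, map_inv, map_zpow] using congrArg p heq

theorem balanced_of_torsion_kernel_general {G Q : Type*} [Group G] [Group Q]
    (p : G →* Q)
    (htor : ∀ x ∈ p.ker, IsOfFinOrder x)
    (hQ : IsBalanced Q) : IsBalanced G :=
  hQ.of_monoidHom p fun _ hx hpx => hx (p.isOfFinOrder_of_isOfFinOrder_map htor hpx)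

/-- An extension of a balanced group by a torsion group is balanced. -/
theorem balanced_of_torsion_kernel {G Q : Type*} [Group G] [Group Q]
    (p : G →* Q) (hp : Function.Surjective p)
    (htor : ∀ x ∈ p.ker, IsOfFinOrder x)
    (hQ : IsBalanced Q) : IsBalanced G :=
  balanced_of_torsion_kernel_general p htor hQ
end

section
/- Let 1 → N → G → Q → 1 be a central short exact sequence of torsion-free groups (N contained in the center of G). If Q and N both satisfy the uniqueness of roots property, then G also satisfies uniqueness of roots: whenever f^n = g^n in G for some positive integer n, we have f = g. -/
/-- Torsion-free monoid (the definition `Monoid.IsTorsionFree` of older Mathlib). -/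
def Monoid.IsTorsionFree (G : Type*) [Monoid G] : Prop :=
  ∀ g : G, g ≠ 1 → ¬IsOfFinOrder g

/-- A group has uniqueness of roots if equal `n`-th powers (for positive `n`)
imply equal elements. -/
def UniqueRoots (G : Type*) [Group G] : Prop :=
  ∀ f g : G, ∀ n : ℕ, 0 < n → f ^ n = g ^ n → f = g

/-!
If `f ^ n = g ^ n` in `G`, uniqueness of roots in `Q` gives `p f = p g`, so `f = g * z` with `z`
in the kernel, hence central. Then `g ^ n = (g * z) ^ n = g ^ n * z ^ n`, so `z ^ n = 1`, and
uniqueness of roots in the kernel forces `z = 1`.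
-/

theorem UniqueRoots.eq_one_of_pow_eq_one {G : Type*} [Group G] (h : UniqueRoots G) {g : G}
    {n : ℕ} (hn : 0 < n) (hg : g ^ n = 1) : g = 1 :=
  h g 1 n hn (by rw [hg, one_pow])

theorem UniqueRoots.map_eq_of_pow_eq {G Q : Type*} [Group G] [Group Q] (hQ : UniqueRoots Q)
    (p : G →* Q) {f g : G} {n : ℕ} (hn : 0 < n) (hfg : f ^ n = g ^ n) : p f = p g :=
  hQ _ _ n hn (by rw [← map_pow, ← map_pow, hfg])

theorem Commute.pow_eq_one_of_mul_pow_eq {M : Type*} [LeftCancelMonoid M] {g z : M}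
    (hgz : Commute g z) {n : ℕ} (h : (g * z) ^ n = g ^ n) : z ^ n = 1 :=
  mul_eq_left.mp (hgz.mul_pow n ▸ h)

theorem uniqueRoots_of_central_ses_general {G Q : Type*} [Group G] [Group Q]
    (p : G →* Q)
    (hcentral : p.ker ≤ Subgroup.center G)
    (hN : UniqueRoots ↥p.ker)
    (hQ : UniqueRoots Q) :
    UniqueRoots G := by
  intro f g n hn hfg
  set z : G := g⁻¹ * f
  have hz : z ∈ p.ker := by
    simp [z, MonoidHom.mem_ker, hQ.map_eq_of_pow_eq p hn hfg]
  have hgz : Commute g z := Subgroup.mem_center_iff.mp (hcentral hz) g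
  have hzn : z ^ n = 1 :=
    hgz.pow_eq_one_of_mul_pow_eq (by rw [mul_inv_cancel_left, hfg])
  have hz1 : z = 1 :=
    congrArg Subtype.val (hN.eq_one_of_pow_eq_one (g := ⟨z, hz⟩) hn (Subtype.ext hzn))
  rwa [inv_mul_eq_one, eq_comm] at hz1

/-- For a central short exact sequence `1 → N → G → Q → 1` of torsion-free groups, if `N`
and `Q` have uniqueness of roots, then so does `G`. -/
theorem uniqueRoots_of_central_ses {G Q : Type*} [Group G] [Group Q]
    (p : G →* Q) (hp : Function.Surjective p)
    (hcentral : p.ker ≤ Subgroup.center G)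
    (htfN : Monoid.IsTorsionFree ↥p.ker)
    (htfG : Monoid.IsTorsionFree G)
    (htfQ : Monoid.IsTorsionFree Q)
    (hN : UniqueRoots ↥p.ker)
    (hQ : UniqueRoots Q) :
    UniqueRoots G :=
  uniqueRoots_of_central_ses_general p hcentral hN hQ
end
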